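/- Suppose every single node i satisfies b_i ≤ C_max, every single edge e = {i,j} satisfies c_e + b_i + b_j ≤ C_max, and for every O/D pair w there exists a path Path_w from w^s to w^t of length at most u^w whose total construction cost is at most C_max. Then the convex hull of the projection onto (x,y,z) of the feasible region of the relaxed Maximal Covering Network Design formulation is full-dimensional, i.e. has dimension |N| + |E| + |W|. -/

import Mathlib

namespace Stmt3

variable {V E W : Type*}

def arcSrc (ends : E → V × V) : E × Bool → V
  | (e, true) => (ends e).1
  | (e, false) => (ends e).2

def arcDst (ends : E → V × V) : E × Bool → V
  | (e, true) => (ends e).2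
  | (e, false) => (ends e).1

def IsWalk (ends : E → V × V) : V → V → List (E × Bool) → Prop
  | s, t, [] => s = t
  | s, t, a :: L => arcSrc ends a = s ∧ IsWalk ends (arcDst ends a) t L

def IsPath (ends : E → V × V) (s t : V) (L : List (E × Bool)) : Prop :=
  IsWalk ends s t L ∧ (s :: L.map (arcDst ends)).Nodup

/-- Total length of a walk. -/
def walkLen (d : E → ℝ) (L : List (E × Bool)) : ℝ :=
  (L.map fun a => d a.1).sum

/-- Construction cost of a path starting at `s`: edge costs plus node costs. -/
def pathCost (ends : E → V × V) (c : E → ℝ) (b : V → ℝ) (s : V)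
    (L : List (E × Bool)) : ℝ :=
  (L.map fun a => c a.1).sum + b s + (L.map fun a => b (arcDst ends a)).sum

/-- The projection onto `(y, x, z)` of the feasible region of (MC). -/
def Feas [Fintype V] [Fintype E]
    (ends : E → V × V) (c : E → ℝ) (b : V → ℝ) (d : E → ℝ)
    (u : W → ℝ) (orig dest : W → V) (Cmax : ℝ)
    (p : (V → ℝ) × (E → ℝ) × (W → ℝ)) : Prop :=
  (∀ i, p.1 i = 0 ∨ p.1 i = 1) ∧ (∀ e, p.2.1 e = 0 ∨ p.2.1 e = 1) ∧
  (∀ w, p.2.2 w = 0 ∨ p.2.2 w = 1) ∧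
  ((∑ e : E, c e * p.2.1 e) + (∑ i : V, b i * p.1 i) ≤ Cmax) ∧
  (∀ e : E, p.2.1 e ≤ p.1 (ends e).1 ∧ p.2.1 e ≤ p.1 (ends e).2) ∧
  (∀ w : W, p.2.2 w = 1 →
      ∃ L : List (E × Bool), IsPath ends (orig w) (dest w) L ∧
        (∀ a ∈ L, p.2.1 a.1 = 1) ∧ walkLen d L ≤ u w)

/-!
The feasible points used are: zero; a single built node; a single built edge with its
endpoints; and, for each pair `w`, the nodes and edges of a path for `w` of cost at most
`Cmax`, covering only `w`. Their coordinate vectors form a block unitriangular system: the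
node points give every `y`-direction, subtracting these from an edge point leaves that edge's
`x`-direction, and subtracting both from a path point leaves the `z`-direction of its pair.
Since zero is feasible, the affine span of the feasible set is its linear span, hence
everything.
-/

theorem _root_.Submodule.eq_top_of_forall_single_mem {R ι : Type*} [Semiring R] [Finite ι]
    [DecidableEq ι] {N : Submodule R (ι → R)} (h : ∀ i, Pi.single i 1 ∈ N) : N = ⊤ := by
  rw [eq_top_iff, ← (Pi.basisFun R ι).span_eq, Submodule.span_le]
  rintro _ ⟨i, rfl⟩
  simpa using h i

theorem _root_.Submodule.eq_top_of_comap_inl_eq_top_of_map_snd_eq_top {R M₁ M₂ : Type*}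
    [Ring R] [AddCommGroup M₁] [AddCommGroup M₂] [Module R M₁] [Module R M₂]
    {N : Submodule R (M₁ × M₂)} (h₁ : N.comap (LinearMap.inl R M₁ M₂) = ⊤)
    (h₂ : N.map (LinearMap.snd R M₁ M₂) = ⊤) : N = ⊤ := by
  rw [eq_top_iff]
  rintro ⟨x, y⟩ -
  obtain ⟨⟨x', y'⟩, hmem, rfl⟩ : y ∈ N.map (LinearMap.snd R M₁ M₂) := h₂ ▸ trivial
  have hdiff : ((x - x', 0) : M₁ × M₂) ∈ N := by
    simpa using (h₁ ▸ trivial : x - x' ∈ N.comap (LinearMap.inl R M₁ M₂))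
  simpa using N.add_mem hdiff hmem

theorem _root_.Submodule.span_eq_top_of_triangular {R ι κ μ : Type*} [Ring R]
    [Finite ι] [Finite κ] [Finite μ] [DecidableEq ι] [DecidableEq κ] [DecidableEq μ]
    {S : Set ((ι → R) × (κ → R) × (μ → R))}
    (hι : ∀ i, (Pi.single i 1, 0, 0) ∈ S) (hκ : ∀ k, ∃ f, (f, Pi.single k 1, 0) ∈ S)
    (hμ : ∀ m, ∃ f g, (f, g, Pi.single m 1) ∈ S) : Submodule.span R S = ⊤ := by
  refine Submodule.eq_top_of_comap_inl_eq_top_of_map_snd_eq_top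
    (Submodule.eq_top_of_forall_single_mem fun i => Submodule.subset_span (hι i))
    (Submodule.eq_top_of_comap_inl_eq_top_of_map_snd_eq_top
      (Submodule.eq_top_of_forall_single_mem fun k => ?_)
      (Submodule.eq_top_of_forall_single_mem fun m => ?_))
  · obtain ⟨f, hf⟩ := hκ k
    exact ⟨(f, Pi.single k 1, 0), Submodule.subset_span hf, rfl⟩
  · obtain ⟨f, g, hfg⟩ := hμ m
    exact ⟨(g, Pi.single m 1), Submodule.mem_map_of_mem (Submodule.subset_span hfg), rfl⟩

theorem _root_.affineSpan_eq_top_of_zero_mem {k M : Type*} [Ring k] [AddCommGroup M] [Module k M]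
    {s : Set M} (h₀ : 0 ∈ s) (hs : Submodule.span k s = ⊤) : affineSpan k s = ⊤ := by
  rw [AffineSubspace.affineSpan_eq_top_iff_vectorSpan_eq_top_of_nonempty k M M ⟨0, h₀⟩,
    vectorSpan_eq_span_vsub_set_right k h₀]
  simpa using hs

theorem _root_.List.sum_toFinset_le {α M : Type*} [DecidableEq α] [AddCommMonoid M]
    [PartialOrder M] [IsOrderedAddMonoid M] {f : α → M} {l : List α} (hf : ∀ a ∈ l, 0 ≤ f a) :
    ∑ a ∈ l.toFinset, f a ≤ (l.map f).sum := by
  rw [Finset.sum_eq_multiset_sum, List.toFinset_val, Multiset.map_coe, Multiset.sum_coe]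
  exact ((l.dedup_sublist).map f).sum_le_sum (by simpa using hf)

theorem IsWalk.arcSrc_mem {ends : E → V × V} {s t : V} {L : List (E × Bool)}
    (hL : IsWalk ends s t L) {a : E × Bool} (ha : a ∈ L) :
    arcSrc ends a ∈ s :: L.map (arcDst ends) := by
  induction L generalizing s with
  | nil => cases ha
  | cons a₀ L ih =>
    obtain ⟨rfl, hL⟩ := hL
    rcases List.mem_cons.1 ha with rfl | ha
    · exact List.mem_cons_self
    · have := ih hL ha
      simp only [List.map_cons, List.mem_cons] at this ⊢
      tauto

theorem IsWalk.ends_mem {ends : E → V × V} {s t : V} {L : List (E × Bool)}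
    (hL : IsWalk ends s t L) {a : E × Bool} (ha : a ∈ L) :
    (ends a.1).1 ∈ s :: L.map (arcDst ends) ∧ (ends a.1).2 ∈ s :: L.map (arcDst ends) := by
  have hsrc := hL.arcSrc_mem ha
  have hdst : arcDst ends a ∈ s :: L.map (arcDst ends) :=
    List.mem_cons_of_mem _ (List.mem_map_of_mem ha)
  obtain ⟨e, _ | _⟩ := a
  exacts [⟨hdst, hsrc⟩, ⟨hsrc, hdst⟩]

section Feasibility

variable [Fintype V] [Fintype E] {ends : E → V × V} {c : E → ℝ} {b : V → ℝ} {d : E → ℝ}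
  {u : W → ℝ} {orig dest : W → V} {Cmax : ℝ}

theorem feas_indicator (X : Finset V) (F : Finset E) (Z : Set W)
    (hcost : ∑ e ∈ F, c e + ∑ i ∈ X, b i ≤ Cmax)
    (hends : ∀ e ∈ F, (ends e).1 ∈ X ∧ (ends e).2 ∈ X)
    (hcover : ∀ w ∈ Z, ∃ L, IsPath ends (orig w) (dest w) L ∧ (∀ a ∈ L, a.1 ∈ F) ∧
      walkLen d L ≤ u w) :
    Feas ends c b d u orig dest Cmax
      ((X : Set V).indicator 1, (F : Set E).indicator 1, Z.indicator 1) := by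
  classical
  refine ⟨fun i => Set.indicator_eq_zero_or_self _ _ i,
    fun e => Set.indicator_eq_zero_or_self _ _ e, fun w => Set.indicator_eq_zero_or_self _ _ w,
    ?_, fun e => ?_, fun w hw => ?_⟩
  · simpa [Set.indicator_apply, Finset.sum_ite_mem] using hcost
  · by_cases he : e ∈ F
    · simp [he, hends e he]
    · simp [he, Set.indicator_nonneg]
  · obtain ⟨L, hL, hLF, hlen⟩ := hcover w ((Set.indicator_eq_one_iff_mem ℝ).1 hw)
    exact ⟨L, hL, fun a ha => by simp [hLF a ha], hlen⟩

theorem feas_zero (h : 0 ≤ Cmax) : Feas ends c b d u orig dest Cmax 0 :=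
  ⟨fun _ => Or.inl rfl, fun _ => Or.inl rfl, fun _ => Or.inl rfl, by simpa using h,
    fun _ => by simp, fun _ hw => absurd hw zero_ne_one⟩

theorem feas_single_node [DecidableEq V] {i : V} (hi : b i ≤ Cmax) :
    Feas ends c b d u orig dest Cmax (Pi.single i 1, 0, 0) := by
  simpa only [Finset.coe_singleton, Finset.coe_empty, Set.indicator_empty',
    Set.indicator_singleton, Pi.one_apply] using
    feas_indicator (ends := ends) (c := c) (d := d) (u := u) (orig := orig)
      (dest := dest) {i} ∅ ∅ (by simpa using hi) (by simp) (by simp)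

theorem feas_single_edge [DecidableEq V] [DecidableEq E] (hb : ∀ i, 0 ≤ b i) {e : E}
    (he : c e + b (ends e).1 + b (ends e).2 ≤ Cmax) :
    Feas ends c b d u orig dest Cmax
      (({(ends e).1, (ends e).2} : Set V).indicator 1, Pi.single e 1, 0) := by
  -- `hb` covers loops, whose two endpoints coincide.
  have hnodes := List.sum_toFinset_le (f := b) (l := [(ends e).1, (ends e).2]) fun i _ => hb i
  simpa only [Finset.coe_insert, Finset.coe_singleton, Set.indicator_empty',
    Set.indicator_singleton, Pi.one_apply] using
    feas_indicator (d := d) (u := u) (orig := orig) (dest := dest)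
      {(ends e).1, (ends e).2} {e} ∅ (by simp at hnodes ⊢; linarith) (by simp) (by simp)

theorem feas_path_point [DecidableEq V] [DecidableEq E] [DecidableEq W] (hc : ∀ e, 0 ≤ c e)
    {w : W} {L : List (E × Bool)} (hL : IsPath ends (orig w) (dest w) L) (hlen : walkLen d L ≤ u w)
    (hcost : pathCost ends c b (orig w) L ≤ Cmax) :
    Feas ends c b d u orig dest Cmax
      (((orig w :: L.map (arcDst ends)).toFinset : Set V).indicator 1,
        ((L.map Prod.fst).toFinset : Set E).indicator 1, Pi.single w 1) := by
  -- Nodes of a path are distinct; for edges, `hc` spares us proving the same.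
  have hedges := List.sum_toFinset_le (f := c) (l := L.map Prod.fst) fun e _ => hc e
  have hnodes := List.sum_toFinset b hL.2
  refine Set.indicator_singleton w (1 : W → ℝ) ▸ feas_indicator _ _ {w} ?_
    (fun e he => ?_) fun w' hw' => ⟨L, ?_⟩
  · simp only [pathCost, List.map_map, List.map_cons, List.sum_cons, Function.comp_def]
      at hcost hedges hnodes
    linarith
  · obtain ⟨a, ha, rfl⟩ := List.mem_map.1 (List.mem_toFinset.1 he)
    simpa using hL.1.ends_mem ha
  · obtain rfl := Set.mem_singleton_iff.1 hw'
    exact ⟨hL, fun a ha => List.mem_toFinset.2 (List.mem_map_of_mem ha), hlen⟩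

end Feasibility

/-- under the stated cost assumptions, the convex hull of the projected
feasible region of the relaxed (MC) formulation is full-dimensional, i.e. its affine
span is the whole space `ℝ^N × ℝ^E × ℝ^W`. -/
theorem full_dimensional [Fintype V] [Fintype E] [Fintype W] [Nonempty V]
    (ends : E → V × V) (c : E → ℝ) (b : V → ℝ) (d : E → ℝ)
    (u : W → ℝ) (orig dest : W → V) (Cmax : ℝ)
    (hb : ∀ i, 0 ≤ b i) (hc : ∀ e, 0 ≤ c e)
    (hnode : ∀ i, b i ≤ Cmax)
    (hedge : ∀ e, c e + b (ends e).1 + b (ends e).2 ≤ Cmax)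
    (hpath : ∀ w : W, ∃ L : List (E × Bool),
        IsPath ends (orig w) (dest w) L ∧ walkLen d L ≤ u w ∧
        pathCost ends c b (orig w) L ≤ Cmax) :
    affineSpan ℝ (convexHull ℝ {p | Feas ends c b d u orig dest Cmax p}) = ⊤ := by
  classical
  obtain ⟨i₀⟩ := ‹Nonempty V›
  rw [affineSpan_convexHull]
  refine affineSpan_eq_top_of_zero_mem (feas_zero ((hb i₀).trans (hnode i₀)))
    (Submodule.span_eq_top_of_triangular (fun i => feas_single_node (hnode i))
      (fun e => ⟨_, feas_single_edge hb (hedge e)⟩) fun w => ?_)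
  obtain ⟨L, hL, hlen, hcost⟩ := hpath w
  exact ⟨_, _, feas_path_point hc hL hlen hcost⟩

end Stmt3
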